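/- arXiv:2305.17103 — 4 statements merged into one kernel-verified Lean document; each statement's English description precedes it below -/
import Mathlib

section
/- Let q be a prime power, f : GF(q^2) → GF(q^2) an additive function, and for m, d ∈ GF(q^2) let t(m,d) be the number of x ∈ GF(q^2) satisfying (mx+d)^q + (mx+d) + f(x)^q + f(x) = x^{q+1}. Then for every fixed m, the multiset { t(m,d) : d ∈ GF(q^2) } does not depend on m; moreover each element of this multiset occurs a multiple of q times. -/
/-!
Write `Tr x = x ^ q + x` and `N x = x ^ (q + 1)`. The substitution `x = u + m ^ q` turns the
equation for the line `y = m x + d` into `N u = Tr (f u) + Tr (d + e)`, where `e` is any solution of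
`Tr e = Tr (f (m ^ q)) + N m`; one exists because `Tr` maps `GF(q²)` onto `GF(q)`. Hence
`t(m, d) = g (Tr (d + e))` with `g s = #{u | N u = Tr (f u) + s}` independent of `m`. As `d` runs
over `GF(q²)` so does `d + e`, and `Tr` takes every value in `GF(q)` exactly `q` times.
-/

open Finset Polynomial

theorem card_filter_pow_eq_mul_le {K : Type*} [CommRing K] [IsDomain K] [Fintype K]
    [DecidableEq K] {q : ℕ} (hq : 2 ≤ q) (c : K) : #{x : K | x ^ q = c * x} ≤ q := by
  have hdeg : (X ^ q - C c * X : K[X]).natDegree = q := by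
    rw [natDegree_sub_eq_left_of_natDegree_lt] <;> simp only [natDegree_X_pow]
    exact (natDegree_C_mul_le c X).trans_lt (by simp; omega)
  have hne : (X ^ q - C c * X : K[X]) ≠ 0 := fun h => by simp [h] at hdeg; omega
  refine hdeg ▸ card_le_degree_of_subset_roots fun x hx => ?_
  rw [mem_roots hne, IsRoot, eval_sub]
  simp_all

theorem AddMonoidHom.map_univ_val_eq_nsmul_image {G H : Type*} [AddGroup G] [Fintype G]
    [AddMonoid H] [DecidableEq H] (T : G →+ H) :
    univ.val.map T = #{g | T g = 0} • (univ.image T).val := by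
  ext y
  rw [Multiset.count_nsmul, Multiset.count_map]
  by_cases hy : y ∈ univ.image T
  · obtain ⟨x, -, rfl⟩ := mem_image.mp hy
    rw [Multiset.count_eq_one_of_mem (univ.image T).nodup hy, mul_one,
      ← card_fiber_eq_of_mem_range T ⟨x, rfl⟩ ⟨0, map_zero T⟩]
    simp only [eq_comm, card_def, filter_val]
  · rw [Multiset.count_eq_zero_of_notMem hy, mul_zero, Multiset.card_eq_zero,
      Multiset.filter_eq_nil]
    exact fun x _ hx => hy (hx ▸ mem_image_of_mem T (mem_univ x))

theorem add_pow_of_isPrimePow_dvd_card {K : Type*} [Field K] [Fintype K] {q : ℕ}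
    (hq : IsPrimePow q) (hqK : q ∣ Fintype.card K) (a b : K) :
    (a + b) ^ q = a ^ q + b ^ q := by
  obtain ⟨p, hchar, n, hp, hcard⟩ := FiniteField.card' K
  obtain ⟨r, k, hr, hk, rfl⟩ := hq
  have hrp : r = p :=
    (Nat.prime_dvd_prime_iff_eq hr.nat_prime hp).mp <| hr.nat_prime.dvd_of_dvd_pow <|
      (dvd_pow_self r hk.ne').trans (hcard ▸ hqK)
  subst hrp
  have := Fact.mk hp
  exact add_pow_char_pow a b r k

section TraceOverSubfield

variable {K : Type*} [Field K] [Fintype K] {q : ℕ}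

theorem pow_pow_of_card_eq_sq (hK : Fintype.card K = q ^ 2) (a : K) : (a ^ q) ^ q = a := by
  rw [← pow_mul, ← sq, ← hK, FiniteField.pow_card]

theorem map_univ_val_pow_add_self [DecidableEq K] (hq : 2 ≤ q) (hK : Fintype.card K = q ^ 2)
    (hadd : ∀ a b : K, (a + b) ^ q = a ^ q + b ^ q) :
    univ.val.map (fun x : K => x ^ q + x) = q • ({z | z ^ q = z} : Finset K).val := by
  let T : K →+ K := AddMonoidHom.mk' (fun x => x ^ q + x) fun a b => by rw [hadd]; ring
  have hfib := T.map_univ_val_eq_nsmul_image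
  have hker : #{x | T x = 0} ≤ q := by
    convert card_filter_pow_eq_mul_le hq (-1 : K) using 3 with x
    exact add_eq_zero_iff_eq_neg.trans (by rw [neg_one_mul])
  have himage : univ.image T ⊆ ({z | z ^ q = z} : Finset K) := by
    simp only [subset_iff, mem_image, mem_filter, mem_univ, true_and]
    rintro _ ⟨x, rfl⟩
    simp only [T, AddMonoidHom.mk'_apply, hadd, pow_pow_of_card_eq_sq hK, add_comm]
  have hfix : #({z | z ^ q = z} : Finset K) ≤ q := by
    simpa only [one_mul] using card_filter_pow_eq_mul_le hq (1 : K)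
  have hcard : q * q = #{x | T x = 0} * #(univ.image T) := by
    have := congrArg Multiset.card hfib
    rwa [Multiset.card_map, card_val, card_univ, hK, sq, Multiset.card_nsmul, card_val] at this
  have hq0 : 0 < q := by omega
  -- `#ker * #image = q²` with both factors at most `q`
  have hker_eq : #{x | T x = 0} = q := by
    nlinarith [card_le_card himage]
  have himage_eq : univ.image T = ({z | z ^ q = z} : Finset K) :=
    eq_of_subset_of_card_le himage (by nlinarith [card_le_card himage])
  change univ.val.map T = _
  rw [hfib, hker_eq, himage_eq]

end TraceOverSubfield

theorem exists_pow_add_self_eq {K : Type*} [Field K] [Fintype K] [DecidableEq K] {q : ℕ}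
    (hq : 2 ≤ q) (hK : Fintype.card K = q ^ 2) (hadd : ∀ a b : K, (a + b) ^ q = a ^ q + b ^ q)
    {c : K} (hc : c ^ q = c) : ∃ e : K, e ^ q + e = c := by
  have hmem : c ∈ univ.val.map (fun x : K => x ^ q + x) := by
    rw [map_univ_val_pow_add_self hq hK hadd, Multiset.mem_nsmul]
    exact ⟨by omega, by simpa using hc⟩
  obtain ⟨e, -, he⟩ := Multiset.mem_map.mp hmem
  exact ⟨e, he⟩

section Intersection

variable {K : Type*} [Field K] [Fintype K] [DecidableEq K] (q : ℕ) (f : K → K)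

def lineIntersectionCount (m d : K) : ℕ :=
  #{x | (m * x + d) ^ q + (m * x + d) + f x ^ q + f x = x ^ (q + 1)}

def normEqTraceCount (s : K) : ℕ :=
  #{u | u ^ (q + 1) = f u ^ q + f u + s}

variable {q f}

theorem lineIntersectionCount_eq (hK : Fintype.card K = q ^ 2)
    (hadd : ∀ a b : K, (a + b) ^ q = a ^ q + b ^ q) (hf : ∀ x y, f (x + y) = f x + f y)
    {m e : K} (he : e ^ q + e = f (m ^ q) ^ q + f (m ^ q) + m ^ (q + 1)) (d : K) :
    lineIntersectionCount q f m d = normEqTraceCount q f ((d + e) ^ q + (d + e)) := by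
  refine (card_equiv (Equiv.addRight (m ^ q)) fun u => ?_).symm
  have hinv := pow_pow_of_card_eq_sq hK
  simp only [mem_filter, mem_univ, true_and, Equiv.coe_addRight, mul_add, hf, hadd, mul_pow,
    hinv, pow_succ]
  constructor <;> intro h <;> linear_combination -h - he

theorem map_univ_val_lineIntersectionCount (hq : 2 ≤ q) (hK : Fintype.card K = q ^ 2)
    (hadd : ∀ a b : K, (a + b) ^ q = a ^ q + b ^ q) (hf : ∀ x y, f (x + y) = f x + f y)
    (m : K) :
    univ.val.map (lineIntersectionCount q f m) =
      q • ({z | z ^ q = z} : Finset K).val.map (normEqTraceCount q f) := by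
  have hinv := pow_pow_of_card_eq_sq hK
  obtain ⟨e, he⟩ := exists_pow_add_self_eq hq hK hadd
    (c := f (m ^ q) ^ q + f (m ^ q) + m ^ (q + 1))
    (by simp only [hadd, hinv, pow_succ, mul_pow]; ring)
  calc univ.val.map (lineIntersectionCount q f m)
      = univ.val.map (fun d => normEqTraceCount q f ((d + e) ^ q + (d + e))) :=
        Multiset.map_congr rfl fun d _ => lineIntersectionCount_eq hK hadd hf he d
    _ = (univ.val.map (fun x : K => x ^ q + x)).map (normEqTraceCount q f) := by
        conv_rhs => rw [← Multiset.map_univ_val_equiv (Equiv.addRight e)]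
        simp only [Multiset.map_map]
        rfl
    _ = _ := by rw [map_univ_val_pow_add_self hq hK hadd, Multiset.map_nsmul]

end Intersection

/-- For an additive `f : GF(q²) → GF(q²)`, the multiset of intersection numbers
`t(m,d)` of the curve `Tr(y + f(x)) = N(x)` with the lines `y = mx + d`,
as `d` ranges over `GF(q²)`, does not depend on `m`; moreover each element of
this multiset occurs a multiple of `q` times. -/
theorem stmt1 (q : ℕ) (hq : IsPrimePow q)
    (K : Type) [Field K] [Fintype K] [DecidableEq K]
    (hK : Fintype.card K = q ^ 2)
    (f : K → K) (hf : ∀ x y : K, f (x + y) = f x + f y) :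
    (∀ m m' : K,
      Finset.univ.val.map (fun d : K =>
        (Finset.univ.filter (fun x : K =>
          (m * x + d) ^ q + (m * x + d) + (f x) ^ q + f x = x ^ (q + 1))).card)
      =
      Finset.univ.val.map (fun d : K =>
        (Finset.univ.filter (fun x : K =>
          (m' * x + d) ^ q + (m' * x + d) + (f x) ^ q + f x = x ^ (q + 1))).card))
    ∧
    (∀ m : K, ∀ n : ℕ,
      q ∣ Multiset.count n
        (Finset.univ.val.map (fun d : K =>
          (Finset.univ.filter (fun x : K =>
            (m * x + d) ^ q + (m * x + d) + (f x) ^ q + f x = x ^ (q + 1))).card))) := by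
  have hadd := add_pow_of_isPrimePow_dvd_card hq (hK ▸ dvd_pow_self q two_ne_zero)
  have key := map_univ_val_lineIntersectionCount hq.two_le hK hadd hf
  refine ⟨fun m m' => (key m).trans (key m').symm, fun m n => ?_⟩
  change q ∣ (univ.val.map (lineIntersectionCount q f m)).count n
  rw [key, Multiset.count_nsmul]
  exact dvd_mul_right q _
end

section
/- Let q be a prime power, h ≥ 2, and let I be a GF(q)-subspace of GF(q^h) with I ∩ GF(q) = {0}. Let I' be a GF(q)-subspace with I ⊆ I' and GF(q) ⊕ I' = GF(q^h). Let S ⊆ GF(q)^2 and S' = { (x, y+i) : (x,y) ∈ S, i ∈ I }. If d = d₀ + d₁ and b = b₀ + b₁ with d₀, b₀ ∈ GF(q), d₁, b₁ ∈ I', and d₁ ∈ I and b₁ ∈ I, then the line y = dx + b in GF(q^h)^2 meets S' in exactly as many points as the line y = d₀x + b₀ in GF(q)^2 meets S. -/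
/-- Cylinder construction, non-vertical lines with direction in `GF(q) ⊕ I`:
if `d = d₀ + d₁`, `b = b₀ + b₁` with `d₀, b₀ ∈ GF(q)` and `d₁, b₁ ∈ I`, then the
line `y = dx + b` meets `S'` in exactly as many points as `y = d₀x + b₀` meets `S`. -/
theorem stmt7 (q h : ℕ) (hq : IsPrimePow q) (hh : 2 ≤ h)
    (F K : Type) [Field F] [Fintype F] [Field K] [Fintype K] [Algebra F K]
    (hF : Fintype.card F = q) (hK : Fintype.card K = q ^ h)
    (I I' : Submodule F K) (hII' : I ≤ I')
    (hdisj : ∀ x : K, x ∈ I → (∃ c : F, algebraMap F K c = x) → x = 0)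
    (hcompl : ∀ z : K, ∃! p : F × I', z = algebraMap F K p.1 + (p.2 : K))
    (S : Set (F × F))
    (d b : K) (d0 b0 : F) (d1 b1 : K)
    (hd1 : d1 ∈ I) (hb1 : b1 ∈ I)
    (hd : d = algebraMap F K d0 + d1) (hb : b = algebraMap F K b0 + b1) :
    {pt : K × K | (∃ p ∈ S, ∃ i ∈ I,
        pt = (algebraMap F K p.1, algebraMap F K p.2 + i))
      ∧ pt.2 = d * pt.1 + b}.ncard
    = {p ∈ S | p.2 = d0 * p.1 + b0}.ncard := by
  classical
  have hinj : Function.Injective (algebraMap F K) := (algebraMap F K).injective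
  set f : F × F → K × K := fun p => (algebraMap F K p.1, d * algebraMap F K p.1 + b) with hf
  have key : ∀ p : F × F, d * algebraMap F K p.1 + b
      = algebraMap F K (d0 * p.1 + b0) + (p.1 • d1 + b1) := by
    intro p
    rw [hd, hb]
    simp only [map_add, map_mul, Algebra.smul_def]
    ring
  have hset : {pt : K × K | (∃ p ∈ S, ∃ i ∈ I,
        pt = (algebraMap F K p.1, algebraMap F K p.2 + i))
      ∧ pt.2 = d * pt.1 + b} = f '' {p ∈ S | p.2 = d0 * p.1 + b0} := by
    ext pt
    constructor
    · rintro ⟨⟨p, hpS, i, hiI, hpt⟩, hline⟩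
      have hptfst : pt.1 = algebraMap F K p.1 := by rw [hpt]
      have hptsnd : pt.2 = algebraMap F K p.2 + i := by rw [hpt]
      have hmemI : (p.1 • d1 + b1) ∈ I := I.add_mem (I.smul_mem _ hd1) hb1
      have h1 : algebraMap F K p.2 + ((⟨i, hII' hiI⟩ : I') : K)
          = algebraMap F K (d0 * p.1 + b0) + ((⟨p.1 • d1 + b1, hII' hmemI⟩ : I') : K) := by
        simpa [hptfst, hptsnd, key p] using hline
      obtain ⟨pr, hpr, huniq⟩ := hcompl (algebraMap F K p.2 + i)
      have e1 := huniq (p.2, ⟨i, hII' hiI⟩) rfl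
      have e2 := huniq (d0 * p.1 + b0, ⟨p.1 • d1 + b1, hII' hmemI⟩) h1
      have heq : p.2 = d0 * p.1 + b0 := by
        have := e1.trans e2.symm
        exact congrArg Prod.fst this
      refine ⟨p, ⟨hpS, heq⟩, ?_⟩
      have : pt = (algebraMap F K p.1, d * algebraMap F K p.1 + b) := by
        apply Prod.ext
        · exact hptfst
        · rw [hline, hptfst]
      exact this.symm
    · rintro ⟨p, ⟨hpS, hp⟩, rfl⟩
      refine ⟨⟨p, hpS, p.1 • d1 + b1, I.add_mem (I.smul_mem _ hd1) hb1, ?_⟩, rfl⟩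
      simp only [hf]
      refine Prod.ext rfl ?_
      rw [key p, hp]
  rw [hset]
  apply Set.ncard_image_of_injOn
  intro p hp p' hp' hfe
  have h1 : p.1 = p'.1 := hinj (congrArg Prod.fst hfe)
  exact Prod.ext h1 (by rw [hp.2, hp'.2, h1])
end

section
/- With the hypotheses of the cylinder construction (S ⊆ GF(q)^2, I ⊆ I' ⊆ GF(q^h) GF(q)-subspaces, GF(q) ⊕ I' = GF(q^h), S' = { (x, y+i) : (x,y) ∈ S, i ∈ I }): if d ∈ GF(q^h) decomposes as d = d₀ + d₁ with d₀ ∈ GF(q) and d₁ ∈ I' \setminus I, then for every b ∈ GF(q^h) the line y = dx + b meets S' in at most one point. -/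
/-- Cylinder construction, lines with direction outside `GF(q) ⊕ I`:
if `d = d₀ + d₁` with `d₀ ∈ GF(q)`, `d₁ ∈ I' \ I`, then for every `b` the line
`y = dx + b` meets `S'` in at most one point. -/
theorem stmt8 (q h : ℕ) (hq : IsPrimePow q) (hh : 2 ≤ h)
    (F K : Type) [Field F] [Fintype F] [Field K] [Fintype K] [Algebra F K]
    (hF : Fintype.card F = q) (hK : Fintype.card K = q ^ h)
    (I I' : Submodule F K) (hII' : I ≤ I')
    (hdisj : ∀ x : K, x ∈ I → (∃ c : F, algebraMap F K c = x) → x = 0)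
    (hcompl : ∀ z : K, ∃! p : F × I', z = algebraMap F K p.1 + (p.2 : K))
    (S : Set (F × F))
    (d : K) (d0 : F) (d1 : K) (hd1 : d1 ∈ I') (hd1' : d1 ∉ I)
    (hd : d = algebraMap F K d0 + d1) (b : K) :
    {pt : K × K | (∃ p ∈ S, ∃ i ∈ I,
        pt = (algebraMap F K p.1, algebraMap F K p.2 + i))
      ∧ pt.2 = d * pt.1 + b}.Subsingleton := by
  rintro ⟨pa, pb⟩ ⟨⟨⟨x, y⟩, hS, i, hi, hpt⟩, hline⟩
    ⟨qa, qb⟩ ⟨⟨⟨x', y'⟩, hS', i', hi', hpt'⟩, hline'⟩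
  cases hpt; cases hpt'
  simp only at hline hline'
  -- subtract the two line equations
  have e : algebraMap F K (y - y') + (i - i')
      = (algebraMap F K d0 + d1) * algebraMap F K (x - x') := by
    rw [hd] at hline hline'
    rw [map_sub, map_sub]
    linear_combination hline - hline'
  have key : algebraMap F K (x - x') * d1
      = algebraMap F K (y - y' - d0 * (x - x')) + (i - i') := by
    simp only [map_sub, map_mul] at e ⊢
    linear_combination -e
  have m1 : algebraMap F K (x - x') * d1 ∈ I' := by
    rw [← Algebra.smul_def]; exact I'.smul_mem _ hd1
  have m2 : i - i' ∈ I := I.sub_mem hi hi'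
  obtain ⟨p, -, hu⟩ := hcompl (algebraMap F K (x - x') * d1)
  have hA : (y - y' - d0 * (x - x'), (⟨i - i', hII' m2⟩ : I')) = p := hu _ key
  have hB : ((0 : F), (⟨algebraMap F K (x - x') * d1, m1⟩ : I')) = p := hu _ (by simp)
  have hAB := hA.trans hB.symm
  have h1 : y - y' - d0 * (x - x') = 0 := congrArg Prod.fst hAB
  have h2 : i - i' = algebraMap F K (x - x') * d1 :=
    congrArg (fun w => ((w.2 : I') : K)) hAB
  have hI : algebraMap F K (x - x') * d1 ∈ I := h2 ▸ m2
  by_cases hx : x = x'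
  · subst hx
    have hii : i = i' := by
      have h2' : i - i' = 0 := by simpa using h2
      exact sub_eq_zero.mp h2'
    have hyy : y = y' := by
      have h1' : y - y' = 0 := by simpa using h1
      exact sub_eq_zero.mp h1'
    rw [hii, hyy]
  · exfalso
    apply hd1'
    have : d1 = (x - x')⁻¹ • (algebraMap F K (x - x') * d1) := by
      rw [Algebra.smul_def, ← mul_assoc, ← map_mul,
        inv_mul_cancel₀ (sub_ne_zero.mpr hx), map_one, one_mul]
    rw [this]
    exact I.smul_mem _ hI
end

section
/- Let q be an odd prime power, a ∈ GF(q^2) with 4·a^{q+1} ≠ 1, and suppose the map x ↦ x^q − 2ax is a bijection of GF(q^2). Then for every m ∈ GF(q^2), the multiset over b ∈ GF(q^2) of the number of solutions x ∈ GF(q^2) of (mx+b)^q + (mx+b) + a^q x^{2q} + a x^2 = x^{q+1} is independent of m. -/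
/-- For `q` odd and `a ∈ GF(q²)` with `4 a^{q+1} ≠ 1`, assuming `x ↦ x^q − 2ax`
is a bijection of `GF(q²)`, the multiset over `b ∈ GF(q²)` of the number of
solutions of `(mx+b)^q + (mx+b) + a^q x^{2q} + a x² = x^{q+1}` does not depend
on `m`. -/
theorem stmt18 (q : ℕ) (hq : IsPrimePow q) (hodd : Odd q)
    (K : Type) [Field K] [Fintype K] [DecidableEq K]
    (hK : Fintype.card K = q ^ 2)
    (a : K) (ha : 4 * a ^ (q + 1) ≠ 1)
    (hbij : Function.Bijective (fun x : K => x ^ q - 2 * a * x)) :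
    ∀ m m' : K,
      Finset.univ.val.map (fun b : K =>
        (Finset.univ.filter (fun x : K =>
          (m * x + b) ^ q + (m * x + b) + a ^ q * x ^ (2 * q) + a * x ^ 2
            = x ^ (q + 1))).card)
      =
      Finset.univ.val.map (fun b : K =>
        (Finset.univ.filter (fun x : K =>
          (m' * x + b) ^ q + (m' * x + b) + a ^ q * x ^ (2 * q) + a * x ^ 2
            = x ^ (q + 1))).card) := by
  intro m m'
  obtain ⟨α, hα⟩ := hbij.2 (m - m')
  simp only [] at hα
  -- characteristic setup
  obtain ⟨p, n, hp, hn, rfl⟩ := hq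
  haveI hpf : Fact p.Prime := ⟨hp.nat_prime⟩
  have hcharK : CharP K p := by
    haveI := ringChar.charP K
    obtain ⟨nn, hrp, hcard⟩ := FiniteField.card K (ringChar K)
    have hdvd : p ∣ ringChar K := by
      have : p ∣ ringChar K ^ (nn : ℕ) := by
        rw [← hcard, hK]
        exact dvd_pow (dvd_pow_self p hn.ne') (by positivity)
      exact hp.nat_prime.dvd_of_dvd_pow this
    have : p = ringChar K := (Nat.prime_dvd_prime_iff_eq hp.nat_prime hrp).mp hdvd
    rw [this]; exact ringChar.charP K
  haveI := hcharK
  set q := p ^ n with hqdef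
  set φ := iterateFrobenius K p n with hφdef
  have hφ : ∀ x : K, φ x = x ^ q := fun x => rfl
  have hφφ : ∀ x : K, φ (φ x) = x := by
    intro x
    rw [hφ, hφ, ← pow_mul, ← sq, ← hK]
    exact FiniteField.pow_card x
  have h2 : (2 : K) ≠ 0 := by
    have hp2 : p ≠ 2 := by
      rintro rfl
      exact (Nat.not_odd_iff_even.mpr (Nat.even_pow.mpr ⟨even_two, hn.ne'⟩)) hodd
    intro h
    have hdvd2 : p ∣ 2 := (CharP.cast_eq_zero_iff K p 2).mp (by exact_mod_cast h)
    exact hp2 ((Nat.prime_dvd_prime_iff_eq hp.nat_prime Nat.prime_two).mp hdvd2)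
  -- hα in φ form
  have hα1 : φ α - 2 * a * α = m - m' := by rw [hφ]; exact hα
  have hα2 : α - 2 * φ a * φ α = φ m - φ m' := by
    have h := congrArg φ hα1
    rw [map_sub, map_sub, map_mul, map_mul, map_ofNat, hφφ] at h
    exact h
  -- the constant shift
  set t : K := (φ m * φ α + m * α + φ a * (φ α) ^ 2 + a * α ^ 2 - φ α * α) / 2 with htdef
  have ht : t + t = φ m * φ α + m * α + φ a * (φ α) ^ 2 + a * α ^ 2 - φ α * α := by
    rw [htdef]; field_simp; ring
  have hφt : φ t = t := by
    have h1 : φ t + φ t = t + t := by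
      rw [← map_add, ht]
      simp only [map_sub, map_add, map_mul, map_pow, hφφ]
      ring
    have h2' : (2 : K) * φ t = 2 * t := by linear_combination h1
    exact mul_left_cancel₀ h2 h2'
  -- rewriting helpers
  have e2q : ∀ y : K, y ^ (2 * q) = (φ y) ^ 2 := by
    intro y; rw [mul_comm, pow_mul, hφ]
  have eq1 : ∀ y : K, y ^ (q + 1) = φ y * y := by
    intro y; rw [pow_succ, hφ]
  -- main algebraic identity
  have main : ∀ b x : K,
      ((m * (x + α) + b) ^ q + (m * (x + α) + b) + a ^ q * (x + α) ^ (2 * q)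
        + a * (x + α) ^ 2) - (x + α) ^ (q + 1)
      = ((m' * x + (b + t)) ^ q + (m' * x + (b + t)) + a ^ q * x ^ (2 * q)
        + a * x ^ 2) - x ^ (q + 1) := by
    intro b x
    simp only [e2q, eq1, ← hφ, map_add, map_mul, hφt]
    linear_combination (-(φ x)) * hα2 - x * hα1 - ht
  -- pointwise solution correspondence
  have key : ∀ b x : K,
      ((m * (x + α) + b) ^ q + (m * (x + α) + b) + a ^ q * (x + α) ^ (2 * q)
        + a * (x + α) ^ 2 = (x + α) ^ (q + 1))
      ↔ ((m' * x + (b + t)) ^ q + (m' * x + (b + t)) + a ^ q * x ^ (2 * q)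
        + a * x ^ 2 = x ^ (q + 1)) := by
    intro b x
    constructor
    · intro h; linear_combination h - main b x
    · intro h; linear_combination h + main b x
  -- solution counts match
  have hcount : ∀ b : K,
      (Finset.univ.filter (fun x : K =>
        (m * x + b) ^ q + (m * x + b) + a ^ q * x ^ (2 * q) + a * x ^ 2
          = x ^ (q + 1))).card
      = (Finset.univ.filter (fun x : K =>
        (m' * x + (b + t)) ^ q + (m' * x + (b + t)) + a ^ q * x ^ (2 * q) + a * x ^ 2
          = x ^ (q + 1))).card := by
    intro b
    apply Finset.card_bij' (fun x _ => x - α) (fun y _ => y + α)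
    · intro x hx
      simp only [Finset.mem_filter, Finset.mem_univ, true_and] at hx ⊢
      have := (key b (x - α)).mp (by rwa [sub_add_cancel])
      exact this
    · intro y hy
      simp only [Finset.mem_filter, Finset.mem_univ, true_and] at hy ⊢
      exact (key b y).mpr hy
    · intro x _; ring
    · intro y _; ring
  -- assemble the multiset equality
  calc Finset.univ.val.map (fun b : K =>
        (Finset.univ.filter (fun x : K =>
          (m * x + b) ^ q + (m * x + b) + a ^ q * x ^ (2 * q) + a * x ^ 2
            = x ^ (q + 1))).card)
      = Finset.univ.val.map (fun b : K =>
        (Finset.univ.filter (fun x : K =>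
          (m' * x + (b + t)) ^ q + (m' * x + (b + t)) + a ^ q * x ^ (2 * q) + a * x ^ 2
            = x ^ (q + 1))).card) := Multiset.map_congr rfl (fun b _ => hcount b)
    _ = (Finset.univ.val.map (fun b : K => b + t)).map (fun b : K =>
        (Finset.univ.filter (fun x : K =>
          (m' * x + b) ^ q + (m' * x + b) + a ^ q * x ^ (2 * q) + a * x ^ 2
            = x ^ (q + 1))).card) := by rw [Multiset.map_map]; rfl
    _ = Finset.univ.val.map (fun b : K =>
        (Finset.univ.filter (fun x : K =>
          (m' * x + b) ^ q + (m' * x + b) + a ^ q * x ^ (2 * q) + a * x ^ 2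
            = x ^ (q + 1))).card) := by
        have : Finset.univ.val.map (fun b : K => b + t)
            = (Finset.univ.map (Equiv.addRight t).toEmbedding).val := rfl
        rw [this, Finset.map_univ_equiv]
end
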